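/- Let f : ℝⁿ → ℝ be quadratic with Hessian ∇²f, and suppose Q* minimizes ‖∇²Q − ∇²Q_α‖_F over quadratics Q interpolating f on X. Write H_F = {∇²Q : Q interpolates f on X}, an affine subspace of symmetric matrices containing ∇²f. Then ∇²Q* − ∇²Q_α is orthogonal (in Frobenius inner product) to the direction space of H_F, and consequently ‖∇²Q_α − ∇²f‖_F² = ‖∇²Q_α − ∇²Q*‖_F² + ‖∇²Q* − ∇²f‖_F² (a Pythagoras identity), which strengthens the projection inequality ‖∇²Q* − ∇²f‖_F ≤ ‖∇²Q_α − ∇²f‖_F. -/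

import Mathlib

/-! Interpolation conditions are affine in the coefficients of `Q`, so with `Q*` and any other
interpolant `Q'` the whole line `Q* + t (Q' - Q*)` interpolates. Minimality of
`‖∇²Q* + t (∇²Q' - ∇²Q*) - ∇²Q_α‖²` at `t = 0` forces the linear term, a Frobenius inner product,
to vanish; taking `Q' = f` gives Pythagoras. -/

structure Quad (n : ℕ) where
  c : ℝ
  g : Fin n → ℝ
  A : Matrix (Fin n) (Fin n) ℝ
  symm : A.IsSymm

namespace Quad
variable {n : ℕ}

noncomputable def eval (Q : Quad n) (x : Fin n → ℝ) : ℝ :=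
  Q.c + (∑ i, Q.g i * x i) + (1 / 2) * ∑ i, ∑ j, x i * Q.A i j * x j

def add (P Q : Quad n) : Quad n :=
  ⟨P.c + Q.c, P.g + Q.g, P.A + Q.A, P.symm.add Q.symm⟩

def sub (P Q : Quad n) : Quad n :=
  ⟨P.c - Q.c, P.g - Q.g, P.A - Q.A, P.symm.sub Q.symm⟩

def smul (r : ℝ) (Q : Quad n) : Quad n :=
  ⟨r * Q.c, r • Q.g, r • Q.A, by
    simp only [Matrix.IsSymm, Matrix.transpose_smul, Q.symm.eq]⟩

def addConst (Q : Quad n) (r : ℝ) : Quad n := ⟨Q.c + r, Q.g, Q.A, Q.symm⟩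

protected def zero : Quad n := ⟨0, 0, 0, by simp [Matrix.IsSymm]⟩

end Quad

noncomputable def frobSq {n : ℕ} (M : Matrix (Fin n) (Fin n) ℝ) : ℝ := ∑ i, ∑ j, (M i j) ^ 2

def Interpolates {n m : ℕ} (Q : Quad n) (h : (Fin n → ℝ) → ℝ)
    (x : Fin m → (Fin n → ℝ)) : Prop :=
  ∀ i, Q.eval (x i) = h (x i)

def IsLFNModel {n m : ℕ} (B : Quad n) (h : (Fin n → ℝ) → ℝ)
    (x : Fin m → (Fin n → ℝ)) (Q : Quad n) : Prop :=
  Interpolates Q h x ∧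
    ∀ Q' : Quad n, Interpolates Q' h x → frobSq (Q.A - B.A) ≤ frobSq (Q'.A - B.A)

/-- Frobenius inner product of matrices. -/
noncomputable def frobInner {n : ℕ} (M N : Matrix (Fin n) (Fin n) ℝ) : ℝ :=
  ∑ i, ∑ j, M i j * N i j

namespace Quad
variable {n : ℕ}

lemma eval_add (P Q : Quad n) (y : Fin n → ℝ) : (P.add Q).eval y = P.eval y + Q.eval y := by
  simp only [eval, add, Pi.add_apply, Matrix.add_apply, add_mul, mul_add,
    Finset.sum_add_distrib]
  ring

lemma eval_sub (P Q : Quad n) (y : Fin n → ℝ) : (P.sub Q).eval y = P.eval y - Q.eval y := by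
  simp only [eval, sub, Pi.sub_apply, Matrix.sub_apply, sub_mul, mul_sub,
    Finset.sum_sub_distrib]
  ring

lemma eval_smul (r : ℝ) (Q : Quad n) (y : Fin n → ℝ) : (smul r Q).eval y = r * Q.eval y := by
  simp only [eval, smul, Pi.smul_apply, Matrix.smul_apply, smul_eq_mul]
  simp only [mul_assoc, mul_left_comm _ r, ← Finset.mul_sum]
  ring

lemma add_smul_sub_A_sub (P Q B : Quad n) (t : ℝ) :
    (P.add (smul t (Q.sub P))).A - B.A = (P.A - B.A) + t • (Q.A - P.A) := by
  simp only [add, smul, sub]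
  abel

end Quad

lemma Interpolates.add_smul_sub {n m : ℕ} {P Q : Quad n} {h : (Fin n → ℝ) → ℝ}
    {x : Fin m → (Fin n → ℝ)} (hP : Interpolates P h x) (hQ : Interpolates Q h x) (t : ℝ) :
    Interpolates (P.add (Quad.smul t (Q.sub P))) h x := by
  intro i
  rw [Quad.eval_add, Quad.eval_smul, Quad.eval_sub, hP i, hQ i]
  ring

section Frobenius
variable {n : ℕ}

lemma frobSq_nonneg (M : Matrix (Fin n) (Fin n) ℝ) : 0 ≤ frobSq M :=
  Finset.sum_nonneg fun _ _ => Finset.sum_nonneg fun _ _ => sq_nonneg _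

lemma frobSq_add (M N : Matrix (Fin n) (Fin n) ℝ) :
    frobSq (M + N) = frobSq M + 2 * frobInner M N + frobSq N := by
  simp only [frobSq, frobInner, Matrix.add_apply, add_sq, Finset.sum_add_distrib,
    Finset.mul_sum, mul_assoc]

lemma frobSq_smul (t : ℝ) (M : Matrix (Fin n) (Fin n) ℝ) : frobSq (t • M) = t ^ 2 * frobSq M := by
  simp only [frobSq, Matrix.smul_apply, smul_eq_mul, mul_pow, Finset.mul_sum]

lemma frobInner_smul_right (t : ℝ) (M N : Matrix (Fin n) (Fin n) ℝ) :
    frobInner M (t • N) = t * frobInner M N := by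
  simp only [frobInner, Matrix.smul_apply, smul_eq_mul, Finset.mul_sum, mul_left_comm]

lemma frobInner_neg_neg (M N : Matrix (Fin n) (Fin n) ℝ) : frobInner (-M) (-N) = frobInner M N := by
  simp only [frobInner, Matrix.neg_apply, neg_mul_neg]

lemma frobInner_eq_zero_of_forall_frobSq_le {D E : Matrix (Fin n) (Fin n) ℝ}
    (h : ∀ t : ℝ, frobSq D ≤ frobSq (D + t • E)) : frobInner D E = 0 := by
  have hdiscrim : discrim (frobSq E) (2 * frobInner D E) 0 ≤ 0 := by
    refine discrim_le_zero fun t => ?_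
    have := h t
    rw [frobSq_add, frobSq_smul, frobInner_smul_right] at this
    linarith
  have : (2 * frobInner D E) ^ 2 = 0 :=
    le_antisymm (by simpa [discrim] using hdiscrim) (sq_nonneg _)
  simpa using this

end Frobenius

namespace IsLFNModel
variable {n m : ℕ} {B Q : Quad n} {h : (Fin n → ℝ) → ℝ} {x : Fin m → (Fin n → ℝ)}

lemma frobInner_eq_zero (hQ : IsLFNModel B h x Q) {Q' : Quad n} (hQ' : Interpolates Q' h x) :
    frobInner (Q.A - B.A) (Q'.A - Q.A) = 0 :=
  frobInner_eq_zero_of_forall_frobSq_le fun t => by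
    simpa only [Quad.add_smul_sub_A_sub] using hQ.2 _ (hQ.1.add_smul_sub hQ' t)

lemma frobSq_sub_eq_add (hQ : IsLFNModel B h x Q) {P : Quad n} (hP : Interpolates P h x) :
    frobSq (B.A - P.A) = frobSq (B.A - Q.A) + frobSq (Q.A - P.A) := by
  have horth : frobInner (B.A - Q.A) (Q.A - P.A) = 0 := by
    rw [← frobInner_neg_neg, neg_sub, neg_sub]
    exact hQ.frobInner_eq_zero hP
  rw [← sub_add_sub_cancel B.A Q.A P.A, frobSq_add, horth]
  ring

end IsLFNModel

/-- Pythagoras identity for the least Frobenius norm updating model: if `f` is a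
quadratic and `Q*` minimizes `‖∇²Q − ∇²Q_α‖_F` over quadratics interpolating `f`
on `X`, then `∇²Q* − ∇²Q_α` is Frobenius-orthogonal to the direction space of
the affine set of feasible Hessians, and
`‖∇²Q_α − ∇²f‖² = ‖∇²Q_α − ∇²Q*‖² + ‖∇²Q* − ∇²f‖²`; in particular
`‖∇²Q* − ∇²f‖_F ≤ ‖∇²Q_α − ∇²f‖_F`. -/
theorem lfn_updating_pythagoras
    {n m : ℕ} (x : Fin m → (Fin n → ℝ)) (Qα f Qstar : Quad n)
    (h₁ : Interpolates Qstar f.eval x)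
    (h₂ : ∀ Q' : Quad n, Interpolates Q' f.eval x →
      frobSq (Qstar.A - Qα.A) ≤ frobSq (Q'.A - Qα.A)) :
    (∀ Q' : Quad n, Interpolates Q' f.eval x →
        frobInner (Qstar.A - Qα.A) (Q'.A - Qstar.A) = 0) ∧
      frobSq (Qα.A - f.A) = frobSq (Qα.A - Qstar.A) + frobSq (Qstar.A - f.A) ∧
      Real.sqrt (frobSq (Qstar.A - f.A)) ≤ Real.sqrt (frobSq (Qα.A - f.A)) := by
  have hQstar : IsLFNModel Qα f.eval x Qstar := ⟨h₁, h₂⟩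
  have hpyth := hQstar.frobSq_sub_eq_add (P := f) fun _ => rfl
  refine ⟨fun _ => hQstar.frobInner_eq_zero, hpyth, Real.sqrt_le_sqrt ?_⟩
  linarith [frobSq_nonneg (Qα.A - Qstar.A)]
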